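/- arXiv:2601.00052 — 3 statements merged into one kernel-verified Lean document; each statement's English description precedes it below -/
import Mathlib

section
/- Let Γ be a finite group, N a normal subgroup, and Λ a subgroup. Set G = Γ/N, let G' = ΛN/N be the image of Λ in G, and let l = [ΛN : Λ]. For a homomorphism χ : G' → Q/Z, let χ̃ : Λ → Q/Z denote its inflation, i.e. the composition of the natural map Λ → ΛN/N = G' with χ. Then the corestriction of χ̃ from Λ to Γ equals l times the inflation to Γ of the corestriction of χ from G' to G; that is, χ̃ ∘ V_{Γ→Λ} = l · ((χ ∘ V_{G→G'}) ∘ π) as homomorphisms Γ → Q/Z, where V denotes the transfer homomorphism and π : Γ → G is the quotient map. -/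
/-!
Let `K = ΛN` be the preimage of `G'` in `Γ`; then `χ̃` is the restriction to `Λ` of the
inflation `χ ∘ π` of `χ` to `K`. Two facts about transfer combine to the result. Transfer
commutes with inflation along a surjection `π` to a full preimage `K = π⁻¹(G')`: a section of
`Γ/K` can be lifted from a section of `G/G'`, and then the two defining products agree term by
term. Restricting a character `ψ` of `K` to `Λ ≤ K` raises its transfer to the power `[K : Λ]`:
representatives of `Γ/Λ` differ from those of `Γ/K` by elements of `K`, whose contributions
telescope, and every coset of `K` splits into `[K : Λ]` cosets of `Λ`.
-/

open Function

theorem Fintype.prod_inv_mul_mul_comp_perm {ι A : Type*} [Fintype ι] [CommGroup A]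
    (σ : Equiv.Perm ι) (a b : ι → A) : ∏ i, (a i)⁻¹ * b i * a (σ i) = ∏ i, b i := by
  rw [Finset.prod_mul_distrib, Finset.prod_mul_distrib, Finset.prod_inv_distrib,
    Equiv.prod_comp σ a, mul_right_comm, inv_mul_cancel, one_mul]

namespace Subgroup

variable {G : Type*} [Group G]

theorem quotientMapOfLE_smul {H K : Subgroup G} (h : H ≤ K) (g : G) (q : G ⧸ H) :
    quotientMapOfLE h (g • q) = g • quotientMapOfLE h q := by
  induction q using QuotientGroup.induction_on with
  | H x => rfl

theorem prod_comp_quotientMapOfLE {M : Type*} [CommMonoid M] {H K : Subgroup G} (h : H ≤ K)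
    [Fintype (G ⧸ H)] [Fintype (G ⧸ K)] (f : G ⧸ K → M) :
    ∏ q : G ⧸ H, f (quotientMapOfLE h q) = (∏ r : G ⧸ K, f r) ^ H.relIndex K := by
  have : Finite ((G ⧸ K) × K ⧸ H.subgroupOf K) := .of_equiv _ (quotientEquivProdOfLE h)
  have := Finite.prod_right (G ⧸ K) (β := K ⧸ H.subgroupOf K)
  let := Fintype.ofFinite (K ⧸ H.subgroupOf K)
  calc ∏ q : G ⧸ H, f (quotientMapOfLE h q)
      = ∏ x : (G ⧸ K) × K ⧸ H.subgroupOf K, f x.1 :=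
        Fintype.prod_equiv (quotientEquivProdOfLE h) _ _ fun _ => rfl
    _ = (∏ r : G ⧸ K, f r) ^ H.relIndex K := by
        rw [Fintype.prod_prod_type, ← Finset.prod_pow]
        simp [relIndex, index, Nat.card_eq_fintype_card]

theorem inv_mul_mul_mem_of_rightInverse {H : Subgroup G} {f : G ⧸ H → G}
    (hf : RightInverse f QuotientGroup.mk) (g : G) (q : G ⧸ H) :
    (f q)⁻¹ * g * f (g⁻¹ • q) ∈ H := by
  rw [mul_assoc, ← QuotientGroup.eq, ← smul_eq_mul, ← MulAction.Quotient.smul_mk, hf, hf,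
    smul_inv_smul]

variable {Q : Type*} [Group Q] {π : G →* Q}

theorem leftRel_comap_iff (H : Subgroup Q) (x y : G) :
    QuotientGroup.leftRel (H.comap π) x y ↔ QuotientGroup.leftRel H (π x) (π y) := by
  simp only [QuotientGroup.leftRel_apply, mem_comap, map_mul, map_inv]

noncomputable def quotientComapEquiv (hπ : Surjective π) (H : Subgroup Q) :
    G ⧸ H.comap π ≃ Q ⧸ H :=
  Equiv.ofBijective (Quotient.map' π fun x y => (leftRel_comap_iff H x y).mp) <| by
    refine ⟨fun a b => ?_, fun q => ?_⟩
    · induction a using QuotientGroup.induction_on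
      induction b using QuotientGroup.induction_on
      exact fun hab => Quotient.sound' ((leftRel_comap_iff H _ _).mpr (Quotient.exact' hab))
    · induction q using QuotientGroup.induction_on with
      | H y => obtain ⟨x, rfl⟩ := hπ y; exact ⟨x, rfl⟩

theorem quotientComapEquiv_mk (hπ : Surjective π) (H : Subgroup Q) (x : G) :
    quotientComapEquiv hπ H x = π x := rfl

theorem quotientComapEquiv_smul (hπ : Surjective π) (H : Subgroup Q) (g : G)
    (r : G ⧸ H.comap π) : quotientComapEquiv hπ H (g • r) = π g • quotientComapEquiv hπ H r := by
  induction r using QuotientGroup.induction_on with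
  | H x => exact congrArg QuotientGroup.mk (map_mul π g x)

end Subgroup

namespace MonoidHom

open Subgroup

variable {G : Type*} [Group G] {H : Subgroup G} {A : Type*} [CommGroup A]

theorem transfer_eq_prod_of_rightInverse [H.FiniteIndex] [Fintype (G ⧸ H)] (ϕ : H →* A)
    {f : G ⧸ H → G} (hf : RightInverse f QuotientGroup.mk) (g : G) :
    transfer ϕ g = ∏ q, ϕ ⟨(f q)⁻¹ * g * f (g⁻¹ • q), inv_mul_mul_mem_of_rightInverse hf g q⟩ := by
  let T : H.LeftTransversal := ⟨Set.range f, isComplement_range_left hf⟩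
  have hT (q : G ⧸ H) : (T.2.leftQuotientEquiv q : G) = f q :=
    IsComplement.leftQuotientEquiv_apply hf q
  rw [transfer_def ϕ T g, leftTransversals.diff, Subsingleton.elim H.fintypeQuotientOfFiniteIndex]
  refine Finset.prod_congr rfl fun q _ => congrArg ϕ (Subtype.ext ?_)
  simp only [smul_apply_eq_smul_apply_inv_smul, hT, smul_eq_mul, mul_assoc]

theorem transfer_comp_inclusion {K : Subgroup G} (h : H ≤ K) [H.FiniteIndex] [K.FiniteIndex]
    (ψ : K →* A) : transfer (ψ.comp (inclusion h)) = transfer ψ ^ H.relIndex K := by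
  let := Fintype.ofFinite (G ⧸ H)
  let := Fintype.ofFinite (G ⧸ K)
  ext g
  have hout : RightInverse (Quotient.out : G ⧸ H → G) QuotientGroup.mk := QuotientGroup.out_eq'
  have hout' : RightInverse (Quotient.out : G ⧸ K → G) QuotientGroup.mk := QuotientGroup.out_eq'
  let c (r : G ⧸ K) : K := ⟨_, inv_mul_mul_mem_of_rightInverse hout' g r⟩
  have hu (q : G ⧸ H) : (quotientMapOfLE h q).out⁻¹ * q.out ∈ K := by
    rw [← QuotientGroup.eq, QuotientGroup.out_eq']
    conv_lhs => rw [← QuotientGroup.out_eq' q]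
    rfl
  let u (q : G ⧸ H) : K := ⟨_, hu q⟩
  have key (q : G ⧸ H) : inclusion h ⟨_, inv_mul_mul_mem_of_rightInverse hout g q⟩ =
      (u q)⁻¹ * c (quotientMapOfLE h q) * u (g⁻¹ • q) := by
    ext
    simp only [u, c, coe_inclusion, coe_mul, coe_inv, quotientMapOfLE_smul]
    group
  rw [pow_apply, transfer_eq_prod_of_rightInverse _ hout, transfer_eq_prod_of_rightInverse _ hout',
    ← prod_comp_quotientMapOfLE h]
  simp only [comp_apply, key, map_mul, map_inv]
  exact Fintype.prod_inv_mul_mul_comp_perm (MulAction.toPerm g⁻¹) _ _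

theorem transfer_comp_subgroupComap {Q : Type*} [Group Q] {π : G →* Q} (hπ : Surjective π)
    (L : Subgroup Q) [L.FiniteIndex] [(L.comap π).FiniteIndex] (χ : L →* A) :
    transfer (χ.comp (π.subgroupComap L)) = (transfer χ).comp π := by
  let := Fintype.ofFinite (G ⧸ L.comap π)
  let := Fintype.ofFinite (Q ⧸ L)
  ext g
  let e := quotientComapEquiv hπ L
  let s (r : G ⧸ L.comap π) : G := surjInv hπ (e r).out
  have hπs (r : G ⧸ L.comap π) : π (s r) = (e r).out := surjInv_eq hπ _
  have hs : RightInverse s QuotientGroup.mk := fun r =>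
    e.injective (by rw [quotientComapEquiv_mk, hπs, QuotientGroup.out_eq'])
  have hout : RightInverse (Quotient.out : Q ⧸ L → Q) QuotientGroup.mk := QuotientGroup.out_eq'
  rw [comp_apply, transfer_eq_prod_of_rightInverse _ hs, transfer_eq_prod_of_rightInverse _ hout]
  refine Fintype.prod_equiv e _ _ fun r => congrArg χ (Subtype.ext ?_)
  change π ((s r)⁻¹ * g * s (g⁻¹ • r)) = _
  rw [map_mul, map_mul, map_inv, hπs, hπs, quotientComapEquiv_smul, map_inv]

end MonoidHom

/-- Let `Γ` be a finite group, `N` a normal subgroup and `Λ` a subgroup. Set `G = Γ/N`,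
let `G' = ΛN/N` be the image of `Λ` in `G` and `l = [ΛN : Λ]`. For a homomorphism
`χ : G' → ℚ/ℤ`, let `χ̃ : Λ → ℚ/ℤ` be its inflation, i.e. the composition of the natural
map `Λ → ΛN/N = G'` with `χ`. Then the corestriction (transfer) of `χ̃` from `Λ` to `Γ`
equals `l` times the inflation to `Γ` of the corestriction of `χ` from `G'` to `G`:
`χ̃ ∘ V_{Γ→Λ} = l · ((χ ∘ V_{G→G'}) ∘ π)` where `π : Γ → G` is the quotient map.
(Homomorphisms to `ℚ/ℤ` are written multiplicatively, so `l ·` becomes the `l`-th power.) -/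
theorem transfer_inflation (Γ : Type*) [Group Γ] [Finite Γ] (N Λ : Subgroup Γ) [N.Normal]
    (χ : ↥(Λ.map (QuotientGroup.mk' N)) →* Multiplicative (AddCircle (1 : ℚ))) :
    MonoidHom.transfer
        (χ.comp (MonoidHom.codRestrict ((QuotientGroup.mk' N).domRestrict Λ)
          (Λ.map (QuotientGroup.mk' N)) (fun x => ⟨(x : Γ), x.2, rfl⟩))) =
      ((MonoidHom.transfer χ).comp (QuotientGroup.mk' N)) ^ (Λ.relIndex (Λ ⊔ N)) := by
  have hle := Subgroup.le_comap_map (QuotientGroup.mk' N) Λ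
  have hχ : χ.comp (MonoidHom.codRestrict ((QuotientGroup.mk' N).domRestrict Λ)
      (Λ.map (QuotientGroup.mk' N)) (fun x => ⟨(x : Γ), x.2, rfl⟩)) =
      (χ.comp ((QuotientGroup.mk' N).subgroupComap _)).comp (Subgroup.inclusion hle) := rfl
  rw [hχ, MonoidHom.transfer_comp_inclusion, MonoidHom.transfer_comp_subgroupComap
    (QuotientGroup.mk'_surjective N), Subgroup.comap_map_eq, QuotientGroup.ker_mk']
end

section
/- Let G be a finite group acting on the set of its subsets by left translation (g • M = {gm : m ∈ M}). If g ∈ G and M is a subset of G with g • M = M, then the order of g divides the cardinality of M. -/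
open Pointwise

/-- Let `G` be a finite group acting on the set of its subsets by left translation
(`g • M = {g * m : m ∈ M}`). If `g ∈ G` and `M ⊆ G` satisfy `g • M = M`, then the order
of `g` divides the cardinality of `M`. -/
theorem orderOf_dvd_ncard_of_smul_eq (G : Type*) [Group G] [Finite G] (g : G) (M : Set G)
    (h : g • M = M) : orderOf g ∣ M.ncard := by
  suffices H : ∀ n, ∀ M : Set G, g • M = M → M.ncard = n → orderOf g ∣ M.ncard from
    H M.ncard M h rfl
  clear h M
  intro n
  induction n using Nat.strong_induction_on with
  | _ n ih =>
  intro M h hn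
  subst hn
  rcases M.eq_empty_or_nonempty with rfl | ⟨x, hx⟩
  · simp
  · -- g generates a subgroup stabilizing M
    have hstab : ∀ k : ℤ, (g ^ k) • M = M := by
      intro k
      have : g ∈ MulAction.stabilizer G M := h
      have hz : g ^ k ∈ MulAction.stabilizer G M :=
        Subgroup.zpow_mem _ this k
      exact hz
    set O : Set G := (fun h : G => h * x) '' (Subgroup.zpowers g : Set G) with hO
    have hOM : O ⊆ M := by
      rintro _ ⟨y, hy, rfl⟩
      obtain ⟨k, rfl⟩ := Subgroup.mem_zpowers_iff.mp hy
      rw [← hstab k]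
      exact Set.smul_mem_smul_set hx
    have hOcard : O.ncard = orderOf g := by
      rw [hO, Set.ncard_image_of_injective _ (mul_left_injective x),
        ← Nat.card_coe_set_eq]
      exact (Nat.card_zpowers g)
    have hgO : g • O = O := by
      ext y
      constructor
      · rintro ⟨_, ⟨z, hz, rfl⟩, rfl⟩
        exact ⟨g * z, Subgroup.mul_mem _ (Subgroup.mem_zpowers g) hz, by simp [smul_eq_mul, mul_assoc]⟩
      · rintro ⟨z, hz, rfl⟩
        exact ⟨g⁻¹ * z * x, ⟨g⁻¹ * z,
          Subgroup.mul_mem _ (Subgroup.inv_mem _ (Subgroup.mem_zpowers g)) hz, rfl⟩,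
          by simp [smul_eq_mul]; group⟩
    have hMO : g • (M \ O) = M \ O := by
      rw [Set.smul_set_sdiff, h, hgO]
    have hfin : M.Finite := Set.toFinite M
    have hlt : (M \ O).ncard < M.ncard := by
      apply Set.ncard_lt_ncard _ hfin
      constructor
      · exact Set.diff_subset
      · intro hsub
        exact (hsub (hOM ⟨1, Subgroup.one_mem _, one_mul x⟩)).2
          ⟨1, Subgroup.one_mem _, one_mul x⟩
    have hdvd := ih _ hlt _ hMO rfl
    have : M.ncard = O.ncard + (M \ O).ncard := by
      rw [add_comm, Set.ncard_diff hOM (Set.toFinite O), Nat.sub_add_cancel (Set.ncard_le_ncard hOM hfin)]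
    rw [this, hOcard]
    exact Nat.dvd_add dvd_rfl hdvd
end

section
/- Let G be a finite group, H a subgroup, and e a positive integer with e ≤ |G|. For a subset M of G, let Stab_H(M) = {h ∈ H : h • M = M} be the stabilizer of M in H under left translation. Then for a homomorphism χ : H → Q/Z, the following are equivalent: (i) χ vanishes on Stab_H(M) for every subset M ⊆ G with |M| = e; (ii) χ(g) = 0 for every g ∈ H with g^e = 1. -/
open Pointwise

private lemma ncard_preimage_mk {G : Type*} [Group G] (Z : Subgroup G) (T : Set (G ⧸ Z)) :
    (QuotientGroup.mk ⁻¹' T : Set G).ncard = Nat.card Z * T.ncard := by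
  rw [← Nat.card_coe_set_eq, ← Nat.card_coe_set_eq,
    Nat.card_congr (QuotientGroup.preimageMkEquivSubgroupProdSet Z T), Nat.card_prod]

/-- Let `G` be a finite group, `H` a subgroup and `e` a positive integer with `e ≤ |G|`.
For a homomorphism `χ : H → ℚ/ℤ` (written multiplicatively), the following are equivalent:
(i) `χ` vanishes on the stabilizer `Stab_H(M) = {h ∈ H : h • M = M}` of every subset
`M ⊆ G` with `|M| = e`; (ii) `χ(g) = 0` for every `g ∈ H` with `g ^ e = 1`. -/
theorem vanish_on_stabilizers_iff (G : Type*) [Group G] [Finite G] (H : Subgroup G)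
    (e : ℕ) (he : 0 < e) (hle : e ≤ Nat.card G)
    (χ : H →* Multiplicative (AddCircle (1 : ℚ))) :
    (∀ M : Set G, M.ncard = e → ∀ h : H, (h : G) • M = M → χ h = 1) ↔
      (∀ h : H, (h : G) ^ e = 1 → χ h = 1) := by
  constructor
  · -- (i) → (ii) : construct a suitable set M
    intro hi h hpow
    set g : G := (h : G) with hg
    set n := orderOf g with hn
    have hdvd : n ∣ e := orderOf_dvd_of_pow_eq_one hpow
    have hn0 : 0 < n := orderOf_pos g
    set Z := Subgroup.zpowers g with hZ
    have hcardZ : Nat.card Z = n := Nat.card_zpowers g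
    have hG : Nat.card G = Nat.card (G ⧸ Z) * Nat.card Z :=
      Subgroup.card_eq_card_quotient_mul_card_subgroup Z
    have hle' : e / n ≤ Nat.card (G ⧸ Z) := by
      have h1 : e ≤ Nat.card (G ⧸ Z) * n := by rw [← hcardZ]; omega
      have := Nat.div_le_div_right (c := n) h1
      rwa [Nat.mul_div_cancel _ hn0] at this
    have hle'' : e / n ≤ (Set.univ : Set (G ⧸ Z)).ncard := by
      rwa [Set.ncard_univ]
    obtain ⟨T, -, hT⟩ := Set.exists_subset_card_eq hle''
    set S : Set G := QuotientGroup.mk ⁻¹' T with hS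
    have hScard : S.ncard = e := by
      rw [hS, ncard_preimage_mk, hcardZ, hT, Nat.mul_div_cancel' hdvd]
    set M : Set G := S⁻¹ with hM
    have hMcard : M.ncard = e := by rw [hM, Set.ncard_inv, hScard]
    have hsmul : g • M = M := by
      ext y
      rw [Set.mem_smul_set_iff_inv_smul_mem]
      have key : ∀ x : G, x ∈ M ↔ QuotientGroup.mk (x⁻¹) ∈ T := by
        intro x; rfl
      rw [key, key, smul_eq_mul, mul_inv_rev, inv_inv]
      have : QuotientGroup.mk (y⁻¹ * g) = (QuotientGroup.mk y⁻¹ : G ⧸ Z) :=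
        QuotientGroup.mk_mul_of_mem y⁻¹ (Subgroup.mem_zpowers g)
      rw [this]
    exact hi M hMcard h hsmul
  · -- (ii) → (i)
    intro hii M hMcard h hstab
    set g : G := (h : G) with hg
    set Z := Subgroup.zpowers g with hZ
    have hstab' : ∀ z ∈ Z, z • M = M := by
      intro z hz
      have hle2 : Z ≤ MulAction.stabilizer G M := by
        rw [hZ, Subgroup.zpowers_le]
        exact hstab
      exact hle2 hz
    set N : Set G := M⁻¹ with hN
    have hNsat : N = QuotientGroup.mk ⁻¹' (QuotientGroup.mk '' N : Set (G ⧸ Z)) := by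
      apply Set.Subset.antisymm (Set.subset_preimage_image _ _)
      rintro x hx
      obtain ⟨y, hy, hxy⟩ := hx
      have hyx : y⁻¹ * x ∈ Z := QuotientGroup.eq.mp hxy
      -- x = y * (y⁻¹ * x), so x⁻¹ = (y⁻¹*x)⁻¹ * y⁻¹ ∈ (y⁻¹*x)⁻¹ • M = M
      have hy' : y⁻¹ ∈ M := hy
      have hz : (y⁻¹ * x)⁻¹ ∈ Z := inv_mem hyx
      have : (y⁻¹ * x)⁻¹ * y⁻¹ ∈ (y⁻¹ * x)⁻¹ • M := Set.smul_mem_smul_set hy'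
      rw [hstab' _ hz] at this
      have hxinv : x⁻¹ ∈ M := by
        have heq : (y⁻¹ * x)⁻¹ * y⁻¹ = x⁻¹ := by group
        rwa [heq] at this
      exact hxinv
    have hdvd : Nat.card Z ∣ e := by
      have : N.ncard = Nat.card Z * (QuotientGroup.mk '' N : Set (G ⧸ Z)).ncard := by
        have h2 := ncard_preimage_mk Z (QuotientGroup.mk '' N)
        rw [← hNsat] at h2; exact h2
      have hNe : N.ncard = e := by rw [hN, Set.ncard_inv, hMcard]
      exact ⟨_, by rw [← hNe, this]⟩
    have hpow : g ^ e = 1 := by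
      have : orderOf g ∣ e := by rwa [← Nat.card_zpowers g]
      exact orderOf_dvd_iff_pow_eq_one.mp this
    exact hii h hpow
end
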